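/- Let A, B be positive semidefinite with supp A ≤ supp B, and Φ a trace non-increasing positive linear map. Then Tr(Φ(A)²·Φ(B)⁻¹) ≤ Tr(A²·B⁻¹), where inverses are generalized inverses. -/

import Mathlib

open Matrix ComplexOrder

/-- `X` is the Moore–Penrose (generalized) inverse of `M`. -/
def IsMoorePenroseInverse {k : ℕ} (M X : Matrix (Fin k) (Fin k) ℂ) : Prop :=
  M * X * M = M ∧ X * M * X = X ∧ (M * X)ᴴ = M * X ∧ (X * M)ᴴ = X * M

/-!
Write `B = S²` and `A = S T S` with `S = B^{1/2}` and `T = (B⁺)^{1/2} A (B⁺)^{1/2}`; the support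
condition `B B⁺ A = A` also gives `A B⁺ A = S T² S`. The spectral decomposition `T = ∑ tᵢ Qᵢ` then
yields positive semidefinite `Nᵢ = S Qᵢ S` with `B = ∑ Nᵢ`, `A = ∑ tᵢ Nᵢ` and `A B⁺ A = ∑ tᵢ² Nᵢ`.
Since everything is a scalar combination of the `Nᵢ`, mere positivity of `Φ` makes
`[[Φ(A B⁺ A), Φ A], [Φ A, Φ B]] = ∑ [[tᵢ², tᵢ], [tᵢ, 1]] ⊗ Φ Nᵢ` positive semidefinite, although
`Φ` need not be 2-positive. Its generalized Schur complement gives `Φ(A) Φ(B)⁺ Φ(A) ≤ Φ(A B⁺ A)`,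
and taking traces, `Tr Φ(A)² Φ(B)⁺ ≤ Tr Φ(A B⁺ A) ≤ Tr A B⁺ A = Tr A² B⁺`.
-/

namespace IsMoorePenroseInverse

variable {k : ℕ} {M X Y : Matrix (Fin k) (Fin k) ℂ}

theorem unique (hX : IsMoorePenroseInverse M X) (hY : IsMoorePenroseInverse M Y) : X = Y := by
  obtain ⟨x1, x2, x3, x4⟩ := hX
  obtain ⟨y1, y2, y3, y4⟩ := hY
  have hMX : M * X = M * Y :=
    calc M * X = Xᴴ * (M * Y * M)ᴴ := by rw [y1, ← conjTranspose_mul, x3]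
    _ = (M * X)ᴴ * (M * Y) := by rw [conjTranspose_mul, y3, ← mul_assoc, ← conjTranspose_mul]
    _ = M * Y := by rw [x3, ← mul_assoc, x1]
  have hXM : X * M = Y * M :=
    calc X * M = (M * (Y * M))ᴴ * Xᴴ := by rw [← mul_assoc, y1, ← conjTranspose_mul, x4]
    _ = (Y * M) * (X * M)ᴴ := by rw [conjTranspose_mul, y4, mul_assoc, ← conjTranspose_mul]
    _ = Y * M := by rw [x4, mul_assoc, ← mul_assoc M, x1]
  calc X = X * M * X := x2.symm
  _ = Y * M * Y := by rw [hXM, mul_assoc, hMX, ← mul_assoc]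
  _ = Y := y2

theorem conjTranspose (h : IsMoorePenroseInverse M X) : IsMoorePenroseInverse Mᴴ Xᴴ := by
  obtain ⟨h1, h2, h3, h4⟩ := h
  refine ⟨?_, ?_, ?_, ?_⟩
  · rw [← conjTranspose_mul, ← conjTranspose_mul, ← mul_assoc, h1]
  · rw [← conjTranspose_mul, ← conjTranspose_mul, ← mul_assoc, h2]
  · rw [← conjTranspose_mul, conjTranspose_conjTranspose, h4]
  · rw [← conjTranspose_mul, conjTranspose_conjTranspose, h3]

theorem isHermitian (hM : M.IsHermitian) (h : IsMoorePenroseInverse M X) : X.IsHermitian :=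
  (hM.eq ▸ h.conjTranspose).unique h

theorem mul_mul_eq_of_range_le {n : Type*} [Fintype n] (h : IsMoorePenroseInverse M X)
    {A : Matrix (Fin k) n ℂ} (hA : LinearMap.range A.mulVecLin ≤ LinearMap.range M.mulVecLin) :
    M * X * A = A := by
  refine ext_iff_mulVec.mpr fun v => ?_
  obtain ⟨w, hw⟩ := hA (LinearMap.mem_range_self A.mulVecLin v)
  change M *ᵥ w = A *ᵥ v at hw
  rw [← mulVec_mulVec, ← hw, mulVec_mulVec, h.1]

end IsMoorePenroseInverse

section FunctionalCalculus

variable {n : Type*} [Fintype n] [DecidableEq n]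

theorem Matrix.cfc_mul_cfc (f g : ℝ → ℝ) (M : Matrix n n ℂ) :
    cfc f M * cfc g M = cfc (fun x => f x * g x) M :=
  (cfc_mul f g M (M.finite_real_spectrum.continuousOn f)
    (M.finite_real_spectrum.continuousOn g)).symm

open scoped MatrixOrder in
theorem Matrix.PosSemidef.cfc_congr {B : Matrix n n ℂ} (hB : B.PosSemidef) {f g : ℝ → ℝ}
    (hfg : ∀ x, 0 ≤ x → f x = g x) : cfc f B = cfc g B :=
  _root_.cfc_congr fun _ hx => hfg _ (spectrum_nonneg_of_nonneg hB.nonneg hx)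

theorem isMoorePenroseInverse_cfc {k : ℕ} {f g : ℝ → ℝ} (hfgf : ∀ x, f x * g x * f x = f x)
    (hgfg : ∀ x, g x * f x * g x = g x) (M : Matrix (Fin k) (Fin k) ℂ) :
    IsMoorePenroseInverse (cfc f M) (cfc g M) := by
  refine ⟨?_, ?_, ?_, ?_⟩
  · simp only [cfc_mul_cfc, hfgf]
  · simp only [cfc_mul_cfc, hgfg]
  · rw [cfc_mul_cfc]; exact (cfc_predicate (R := ℝ) _ M).star_eq
  · rw [cfc_mul_cfc]; exact (cfc_predicate (R := ℝ) _ M).star_eq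

-- Since `(0 : ℝ)⁻¹ = 0`, `x ↦ x⁻¹` is the Moore–Penrose inverse of a real number.
theorem isMoorePenroseInverse_cfc_inv {k : ℕ} {M : Matrix (Fin k) (Fin k) ℂ}
    (hM : M.IsHermitian) : IsMoorePenroseInverse M (cfc (·⁻¹ : ℝ → ℝ) M) := by
  simpa only [cfc_id' ℝ M hM.isSelfAdjoint] using
    isMoorePenroseInverse_cfc (f := fun x => x) (g := (·⁻¹)) mul_inv_mul_cancel
      (fun x => by simpa using mul_inv_mul_cancel x⁻¹) M

end FunctionalCalculus

namespace Matrix.IsHermitian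

variable {𝕜 n : Type*} [RCLike 𝕜] [Fintype n] [DecidableEq n] {T : Matrix n n 𝕜}

noncomputable def eigenprojection (hT : T.IsHermitian) (i : n) : Matrix n n 𝕜 :=
  Unitary.conjStarAlgAut 𝕜 _ hT.eigenvectorUnitary (single i i 1)

theorem eigenprojection_posSemidef (hT : T.IsHermitian) (i : n) :
    (hT.eigenprojection i).PosSemidef := by
  rw [eigenprojection, Unitary.conjStarAlgAut_apply, star_eq_conjTranspose, ← diagonal_single]
  exact (PosSemidef.diagonal (Pi.single_nonneg.mpr zero_le_one)).mul_mul_conjTranspose_same _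

theorem cfc_eq_sum_smul_eigenprojection (hT : T.IsHermitian) (f : ℝ → ℝ) :
    cfc f T = ∑ i, f (hT.eigenvalues i) • hT.eigenprojection i := by
  rw [hT.cfc_eq, IsHermitian.cfc, ← Finset.univ_sum_single (RCLike.ofReal ∘ f ∘ hT.eigenvalues),
    ← diagonalAddMonoidHom_apply, map_sum, map_sum]
  refine Finset.sum_congr rfl fun i _ => ?_
  rw [diagonalAddMonoidHom_apply, diagonal_single, eigenprojection,
    RCLike.real_smul_eq_coe_smul (K := 𝕜), ← map_smul, smul_single, smul_eq_mul, mul_one]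
  rfl

end Matrix.IsHermitian

section BlockMatrices

variable {n : Type*} [Fintype n] [DecidableEq n]

theorem Matrix.PosSemidef.fromBlocks_sq_smul_smul {R : Matrix n n ℂ} (hR : R.PosSemidef) (t : ℝ) :
    (fromBlocks (t ^ 2 • R) (t • R) (t • R) R).PosSemidef := by
  have hL : Matrix.fromRows (t • (1 : Matrix n n ℂ)) 1 * R *
      (Matrix.fromRows (t • (1 : Matrix n n ℂ)) 1)ᴴ = fromBlocks (t ^ 2 • R) (t • R) (t • R) R := by
    rw [fromRows_mul, conjTranspose_fromRows_eq_fromCols_conjTranspose, fromRows_mul_fromCols]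
    simp [sq, smul_smul]
  exact hL ▸ hR.mul_mul_conjTranspose_same _

theorem Matrix.posSemidef_fromBlocks_sum_smul {ι : Type*} [Fintype ι] {R : ι → Matrix n n ℂ}
    (hR : ∀ i, (R i).PosSemidef) (t : ι → ℝ) :
    (fromBlocks (∑ i, t i ^ 2 • R i) (∑ i, t i • R i) (∑ i, t i • R i) (∑ i, R i)).PosSemidef := by
  have hsum : fromBlocks (∑ i, t i ^ 2 • R i) (∑ i, t i • R i) (∑ i, t i • R i) (∑ i, R i)
      = ∑ i, fromBlocks (t i ^ 2 • R i) (t i • R i) (t i • R i) (R i) := by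
    ext (i | i) (j | j) <;> simp [Matrix.sum_apply]
  rw [hsum]
  exact posSemidef_sum _ fun i _ => (hR i).fromBlocks_sq_smul_smul (t i)

theorem Matrix.PosSemidef.schurComplement_of_fromBlocks {k : ℕ} {D : Matrix n n ℂ}
    {X : Matrix n (Fin k) ℂ} {C Cinv : Matrix (Fin k) (Fin k) ℂ}
    (h : (fromBlocks D X Xᴴ C).PosSemidef) (hCinv : IsMoorePenroseInverse C Cinv) :
    (D - X * Cinv * Xᴴ).PosSemidef := by
  have hCinvH : Cinvᴴ = Cinv := (hCinv.isHermitian (h.submatrix Sum.inr).1).eq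
  set L := Matrix.fromCols (1 : Matrix n n ℂ) (-(X * Cinv))
  have hL : L * fromBlocks D X Xᴴ C * Lᴴ = D - X * Cinv * Xᴴ := by
    rw [fromCols_mul_fromBlocks, conjTranspose_fromCols_eq_fromRows_conjTranspose,
      fromCols_mul_fromRows]
    simp only [Matrix.one_mul, conjTranspose_one, Matrix.mul_one, conjTranspose_neg,
      conjTranspose_mul, hCinvH, Matrix.neg_mul, Matrix.mul_neg, Matrix.add_mul]
    have hCinvCCinv : X * Cinv * C * (Cinv * Xᴴ) = X * Cinv * Xᴴ := by
      conv_rhs => rw [← hCinv.2.1]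
      simp only [Matrix.mul_assoc]
    rw [hCinvCCinv, Matrix.mul_assoc X Cinv Xᴴ]
    abel
  exact hL ▸ h.mul_mul_conjTranspose_same L

end BlockMatrices

section Decomposition

variable {k : ℕ} {A B Binv : Matrix (Fin k) (Fin k) ℂ}

theorem exists_sandwich_of_range_le (hA : A.IsHermitian) (hB : B.PosSemidef)
    (hAB : LinearMap.range A.mulVecLin ≤ LinearMap.range B.mulVecLin)
    (hBinv : IsMoorePenroseInverse B Binv) :
    ∃ S T : Matrix (Fin k) (Fin k) ℂ, S.IsHermitian ∧ T.IsHermitian ∧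
      S * S = B ∧ S * T * S = A ∧ S * T ^ 2 * S = A * Binv * A := by
  have hPA : B * Binv * A = A := hBinv.mul_mul_eq_of_range_le hAB
  have hAP : A * (B * Binv) = A := by
    simpa only [conjTranspose_mul, hA.eq, hBinv.2.2.1] using congr_arg conjTranspose hPA
  have hBinv_eq : Binv = cfc (·⁻¹ : ℝ → ℝ) B :=
    hBinv.unique (isMoorePenroseInverse_cfc_inv hB.1)
  set S := cfc Real.sqrt B
  set S' := cfc (fun x => (Real.sqrt x)⁻¹) B
  have hS'H : S'.IsHermitian := cfc_predicate _ B
  have hSS : S * S = B := by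
    rw [cfc_mul_cfc, hB.cfc_congr fun x hx => Real.mul_self_sqrt hx, cfc_id' ℝ B hB.1.isSelfAdjoint]
  have hS'S' : S' * S' = Binv := by
    rw [cfc_mul_cfc, hBinv_eq]
    exact hB.cfc_congr fun x hx => by rw [← mul_inv, Real.mul_self_sqrt hx]
  have hSS' : S * S' = B * Binv := by
    rw [← hSS, ← hS'S', cfc_mul_cfc, cfc_mul_cfc, cfc_mul_cfc, cfc_mul_cfc]
    congr 1
    funext x
    rcases eq_or_ne (Real.sqrt x) 0 with h | h <;> field_simp [h]
  have hS'S : S' * S = B * Binv := by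
    rw [← hSS', (cfc_commute_cfc _ _ B).eq]
  refine ⟨S, S' * A * S', cfc_predicate _ B, ?_, hSS, ?_, ?_⟩
  · simpa only [hS'H.eq] using isHermitian_mul_mul_conjTranspose S' hA
  · calc S * (S' * A * S') * S = (S * S') * A * (S' * S) := by simp only [mul_assoc]
      _ = A := by rw [hSS', hS'S, hPA, hAP]
  · calc S * (S' * A * S') ^ 2 * S = (S * S') * A * (S' * S') * A * (S' * S) := by
          simp only [sq, mul_assoc]
      _ = A * Binv * A := by rw [hSS', hS'S', hS'S, hPA, mul_assoc _ A, hAP]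

theorem exists_sum_decomposition_of_range_le (hA : A.IsHermitian) (hB : B.PosSemidef)
    (hAB : LinearMap.range A.mulVecLin ≤ LinearMap.range B.mulVecLin)
    (hBinv : IsMoorePenroseInverse B Binv) :
    ∃ (N : Fin k → Matrix (Fin k) (Fin k) ℂ) (t : Fin k → ℝ), (∀ i, (N i).PosSemidef) ∧
      B = ∑ i, N i ∧ A = ∑ i, t i • N i ∧ A * Binv * A = ∑ i, t i ^ 2 • N i := by
  obtain ⟨S, T, hS, hT, hSS, hSTS, hST2S⟩ := exists_sandwich_of_range_le hA hB hAB hBinv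
  have hsandwich : ∀ f : ℝ → ℝ,
      S * cfc f T * S = ∑ i, f (hT.eigenvalues i) • (S * hT.eigenprojection i * S) := by
    intro f
    simp only [hT.cfc_eq_sum_smul_eigenprojection, Finset.mul_sum, Finset.sum_mul,
      Matrix.mul_smul, Matrix.smul_mul]
  refine ⟨fun i => S * hT.eigenprojection i * S, hT.eigenvalues, fun i => ?_, ?_, ?_, ?_⟩
  · simpa only [hS.eq] using (hT.eigenprojection_posSemidef i).mul_mul_conjTranspose_same S
  · simpa only [cfc_one ℝ T hT.isSelfAdjoint, mul_one, hSS, Pi.one_apply, one_smul] using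
      hsandwich 1
  · calc A = S * cfc id T * S := by rw [cfc_id ℝ T hT.isSelfAdjoint, hSTS]
      _ = _ := hsandwich id
  · calc A * Binv * A = S * cfc (· ^ 2) T * S := by rw [cfc_pow_id T 2 hT.isSelfAdjoint, hST2S]
      _ = _ := hsandwich (· ^ 2)

end Decomposition

/-- **Monotonicity of the Rényi 2-relative entropy.** If `A, B ≥ 0` with
`supp A ≤ supp B` and `Φ` is a trace non-increasing positive linear map, then
`Tr (Φ(A)² Φ(B)⁻¹) ≤ Tr (A² B⁻¹)`, where the inverses are generalized
(Moore–Penrose) inverses. -/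
theorem renyi_two_monotonicity {m k : ℕ}
    (Φ : Matrix (Fin m) (Fin m) ℂ →ₗ[ℂ] Matrix (Fin k) (Fin k) ℂ)
    (hΦ : ∀ X : Matrix (Fin m) (Fin m) ℂ, X.PosSemidef → (Φ X).PosSemidef)
    (hΦtr : ∀ X : Matrix (Fin m) (Fin m) ℂ, X.PosSemidef → (Φ X).trace ≤ X.trace)
    (A B : Matrix (Fin m) (Fin m) ℂ) (hA : A.PosSemidef) (hB : B.PosSemidef)
    (hsupp : LinearMap.range A.mulVecLin ≤ LinearMap.range B.mulVecLin)
    (Binv : Matrix (Fin m) (Fin m) ℂ) (hBinv : IsMoorePenroseInverse B Binv)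
    (Cinv : Matrix (Fin k) (Fin k) ℂ) (hCinv : IsMoorePenroseInverse (Φ B) Cinv) :
    (Φ A * Φ A * Cinv).trace ≤ (A * A * Binv).trace := by
  obtain ⟨N, t, hN, hBN, hAN, hABA⟩ := exists_sum_decomposition_of_range_le hA.1 hB hsupp hBinv
  have hΦA : (Φ A)ᴴ = Φ A := (hΦ A hA).1.eq
  have hblock : (fromBlocks (Φ (A * Binv * A)) (Φ A) (Φ A)ᴴ (Φ B)).PosSemidef := by
    rw [hΦA, hABA, hAN, hBN]
    simpa only [map_sum, LinearMap.map_smul_of_tower] using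
      posSemidef_fromBlocks_sum_smul (fun i => hΦ _ (hN i)) t
  have hABA_psd : (A * Binv * A).PosSemidef :=
    hABA ▸ posSemidef_sum _ fun i _ => (hN i).smul (sq_nonneg (t i))
  calc (Φ A * Φ A * Cinv).trace = (Φ A * Cinv * Φ A).trace := (trace_mul_cycle _ _ _).symm
    _ ≤ (Φ (A * Binv * A)).trace := by
      simpa only [hΦA, trace_sub, sub_nonneg] using
        (hblock.schurComplement_of_fromBlocks hCinv).trace_nonneg
    _ ≤ (A * Binv * A).trace := hΦtr _ hABA_psd
    _ = (A * A * Binv).trace := trace_mul_cycle _ _ _
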